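/- For every integer n ≥ 1 and every payoff function u₁ : Fin 2 × Fin n × Fin n → ℝ taking only the values 0 and 1, the minmax value for Player 1 of the three-player game with payoff u₁ belongs to the set {0, 1/2, 3/4, 1}; in particular it is a rational number. -/

import Mathlib

/-!
Call a cell `(j, k)` a zero of action `a` if `u (a, j, k) = 0`. If some cell is a zero of both
actions, the opponents play it and hold Player 1 to `0`. Otherwise every cell pays `1` to one of
the two actions, so the best response earns at least `1/2`; if a zero of action 0 and a zero of
action 1 share a row or a column, mixing the two cells half-half in the other coordinate gives
exactly `1/2`. If the zeros of the two actions lie in disjoint rows and disjoint columns, action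
`a` loses at most `σ₂(rows of zeros of a) * σ₃(columns of zeros of a)`, and one of these two
products is at most `1/4`; mixing a zero of each action half-half in both coordinates gives
exactly `3/4`. Finally, if one action has no zero at all, the value is `1`.
-/

/-- A mixed strategy on a finite strategy set `S`. -/
def IsMixedStrategy {S : Type*} [Fintype S] (σ : S → ℝ) : Prop :=
  (∀ s, 0 ≤ σ s) ∧ ∑ s, σ s = 1

/-- The minmax (threat) value for Player 1 of the three-player game with payoff `u`:
the minimum over mixed strategy profiles of Players 2 and 3 of the best-response
payoff of Player 1 (the minimum is attained, so `sInf` is a minimum). -/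
noncomputable def minmaxVal {S₁ S₂ S₃ : Type*} [Fintype S₁] [Fintype S₂] [Fintype S₃]
    (u : S₁ × S₂ × S₃ → ℝ) : ℝ :=
  sInf { v | ∃ σ₂ : S₂ → ℝ, ∃ σ₃ : S₃ → ℝ,
    IsMixedStrategy σ₂ ∧ IsMixedStrategy σ₃ ∧
    v = ⨆ a : S₁, ∑ j : S₂, ∑ k : S₃, σ₂ j * σ₃ k * u (a, j, k) }

open Finset

namespace IsMixedStrategy

variable {S : Type*} [Fintype S] {σ : S → ℝ}

theorem sum_nonneg (hσ : IsMixedStrategy σ) (A : Finset S) : 0 ≤ ∑ s ∈ A, σ s :=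
  Finset.sum_nonneg fun s _ => hσ.1 s

theorem sum_add_sum_le_one (hσ : IsMixedStrategy σ) {A B : Finset S} (hAB : Disjoint A B) :
    ∑ s ∈ A, σ s + ∑ s ∈ B, σ s ≤ 1 := by
  classical
  rw [← sum_union hAB, ← hσ.2]
  exact sum_le_sum_of_subset_of_nonneg (subset_univ _) fun s _ _ => hσ.1 s

end IsMixedStrategy

section HalfMix

variable {S : Type*} [Fintype S] [DecidableEq S]

noncomputable def halfMix (s s' : S) : S → ℝ :=
  fun t => ((if t = s then 1 else 0) + if t = s' then 1 else 0) / 2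

theorem isMixedStrategy_halfMix (s s' : S) : IsMixedStrategy (halfMix s s') := by
  refine ⟨fun t => ?_, ?_⟩
  · simp only [halfMix]
    split_ifs <;> norm_num
  · simp [halfMix, ← sum_div, sum_add_distrib]

theorem sum_halfMix_mul (s s' : S) (f : S → ℝ) :
    ∑ t, halfMix s s' t * f t = (f s + f s') / 2 := by
  simp [halfMix, add_mul, div_mul_eq_mul_div, ← sum_div, sum_add_distrib]

end HalfMix

variable {S₁ S₂ S₃ : Type*} [Fintype S₂] [Fintype S₃]

noncomputable def expectedPayoff (u : S₁ × S₂ × S₃ → ℝ) (σ₂ : S₂ → ℝ) (σ₃ : S₃ → ℝ) (a : S₁) :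
    ℝ :=
  ∑ j, ∑ k, σ₂ j * σ₃ k * u (a, j, k)

section Payoff

variable {u : S₁ × S₂ × S₃ → ℝ} {σ₂ : S₂ → ℝ} {σ₃ : S₃ → ℝ}

theorem sum_sum_mul_eq_one (hσ₂ : IsMixedStrategy σ₂) (hσ₃ : IsMixedStrategy σ₃) :
    ∑ j, ∑ k, σ₂ j * σ₃ k = 1 := by
  rw [← sum_mul_sum, hσ₂.2, hσ₃.2, one_mul]

theorem le_sum_sum_mul (hσ₂ : IsMixedStrategy σ₂) (hσ₃ : IsMixedStrategy σ₃)
    {f : S₂ → S₃ → ℝ} {c : ℝ} (hf : ∀ j k, c ≤ f j k) : c ≤ ∑ j, ∑ k, σ₂ j * σ₃ k * f j k :=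
  calc c = ∑ j, ∑ k, σ₂ j * σ₃ k * c := by
        simp only [← sum_mul, sum_sum_mul_eq_one hσ₂ hσ₃, one_mul]
    _ ≤ _ := sum_le_sum fun j _ => sum_le_sum fun k _ =>
      mul_le_mul_of_nonneg_left (hf j k) (mul_nonneg (hσ₂.1 j) (hσ₃.1 k))

theorem le_expectedPayoff (hσ₂ : IsMixedStrategy σ₂) (hσ₃ : IsMixedStrategy σ₃) {a : S₁} {c : ℝ}
    (h : ∀ j k, c ≤ u (a, j, k)) : c ≤ expectedPayoff u σ₂ σ₃ a :=
  le_sum_sum_mul hσ₂ hσ₃ h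

theorem expectedPayoff_halfMix [DecidableEq S₂] [DecidableEq S₃] (j j' : S₂) (k k' : S₃) (a : S₁) :
    expectedPayoff u (halfMix j j') (halfMix k k') a =
      (u (a, j, k) + u (a, j, k') + u (a, j', k) + u (a, j', k')) / 4 := by
  simp only [expectedPayoff, mul_assoc, ← mul_sum, sum_halfMix_mul]
  ring

theorem one_sub_expectedPayoff_le (hσ₂ : IsMixedStrategy σ₂) (hσ₃ : IsMixedStrategy σ₃) {a : S₁}
    (hu : ∀ j k, 0 ≤ u (a, j, k)) {R : Finset S₂} {C : Finset S₃}
    (hRC : ∀ j k, u (a, j, k) < 1 → j ∈ R ∧ k ∈ C) :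
    1 - expectedPayoff u σ₂ σ₃ a ≤ (∑ j ∈ R, σ₂ j) * ∑ k ∈ C, σ₃ k := by
  classical
  have hcell : ∀ j k, σ₂ j * σ₃ k * (1 - u (a, j, k)) ≤
      (if j ∈ R then σ₂ j else 0) * (if k ∈ C then σ₃ k else 0) := by
    intro j k
    have hσ := mul_nonneg (hσ₂.1 j) (hσ₃.1 k)
    by_cases hjk : j ∈ R ∧ k ∈ C
    · rw [if_pos hjk.1, if_pos hjk.2]
      exact mul_le_of_le_one_right hσ (by linarith [hu j k])
    · have h1 : 1 ≤ u (a, j, k) := not_lt.1 fun h => hjk (hRC j k h)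
      calc σ₂ j * σ₃ k * (1 - u (a, j, k)) ≤ 0 := mul_nonpos_of_nonneg_of_nonpos hσ (by linarith)
        _ ≤ _ := mul_nonneg (by split_ifs <;> simp [hσ₂.1 j]) (by split_ifs <;> simp [hσ₃.1 k])
  calc 1 - expectedPayoff u σ₂ σ₃ a = ∑ j, ∑ k, σ₂ j * σ₃ k * (1 - u (a, j, k)) := by
        simp only [expectedPayoff, mul_sub, mul_one, sum_sub_distrib, sum_sum_mul_eq_one hσ₂ hσ₃]
    _ ≤ ∑ j, ∑ k, (if j ∈ R then σ₂ j else 0) * (if k ∈ C then σ₃ k else 0) :=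
        sum_le_sum fun j _ => sum_le_sum fun k _ => hcell j k
    _ = _ := by rw [← sum_mul_sum, sum_ite_mem, sum_ite_mem, univ_inter, univ_inter]

end Payoff

theorem min_mul_le_quarter {x x' y y' : ℝ} (hx : 0 ≤ x) (hx' : 0 ≤ x') (hy : 0 ≤ y) (hy' : 0 ≤ y')
    (hxx' : x + x' ≤ 1) (hyy' : y + y' ≤ 1) : min (x * y) (x' * y') ≤ 1 / 4 := by
  by_contra! h
  have h₁ : 1 / 4 < x * y := lt_min_iff.1 h |>.1
  have h₂ : 1 / 4 < x' * y' := lt_min_iff.1 h |>.2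
  have hxx : x * x' ≤ 1 / 4 := by nlinarith [sq_nonneg (x - x')]
  have hyy : y * y' ≤ 1 / 4 := by nlinarith [sq_nonneg (y - y')]
  nlinarith [mul_nonneg hx hx', mul_nonneg hy hy']

section Minmax

variable [Fintype S₁] {u : S₁ × S₂ × S₃ → ℝ}

theorem minmaxVal_eq_sInf_expectedPayoff : minmaxVal u = sInf {v | ∃ σ₂ σ₃,
    IsMixedStrategy σ₂ ∧ IsMixedStrategy σ₃ ∧ v = ⨆ a, expectedPayoff u σ₂ σ₃ a} := rfl

theorem minmaxVal_le [Nonempty S₁] (hu : ∀ x, 0 ≤ u x) {σ₂ : S₂ → ℝ} {σ₃ : S₃ → ℝ}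
    (hσ₂ : IsMixedStrategy σ₂) (hσ₃ : IsMixedStrategy σ₃) {c : ℝ}
    (h : ∀ a, expectedPayoff u σ₂ σ₃ a ≤ c) : minmaxVal u ≤ c := by
  rw [minmaxVal_eq_sInf_expectedPayoff]
  refine le_trans (csInf_le ⟨0, ?_⟩ ⟨σ₂, σ₃, hσ₂, hσ₃, rfl⟩) (ciSup_le h)
  rintro _ ⟨τ₂, τ₃, hτ₂, hτ₃, rfl⟩
  exact Real.iSup_nonneg fun a => le_expectedPayoff hτ₂ hτ₃ fun j k => hu _

theorem le_minmaxVal [Nonempty S₂] [Nonempty S₃] {c : ℝ}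
    (h : ∀ σ₂ σ₃, IsMixedStrategy σ₂ → IsMixedStrategy σ₃ → ∃ a, c ≤ expectedPayoff u σ₂ σ₃ a) :
    c ≤ minmaxVal u := by
  classical
  obtain ⟨j⟩ := ‹Nonempty S₂›
  obtain ⟨k⟩ := ‹Nonempty S₃›
  rw [minmaxVal_eq_sInf_expectedPayoff]
  refine le_csInf ⟨_, _, _, isMixedStrategy_halfMix j j, isMixedStrategy_halfMix k k, rfl⟩ ?_
  rintro _ ⟨σ₂, σ₃, hσ₂, hσ₃, rfl⟩
  obtain ⟨a, ha⟩ := h σ₂ σ₃ hσ₂ hσ₃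
  exact ha.trans (le_ciSup (Finite.bddAbove_range _) a)

theorem minmaxVal_nonneg (hu : ∀ x, 0 ≤ u x) : 0 ≤ minmaxVal u := by
  rw [minmaxVal_eq_sInf_expectedPayoff]
  refine Real.sInf_nonneg ?_
  rintro _ ⟨σ₂, σ₃, hσ₂, hσ₃, rfl⟩
  exact Real.iSup_nonneg fun a => le_expectedPayoff hσ₂ hσ₃ fun j k => hu _

theorem minmaxVal_le_of_four_cells [Nonempty S₁] (hu : ∀ x, 0 ≤ u x) (j j' : S₂) (k k' : S₃)
    {c : ℝ} (h : ∀ a, u (a, j, k) + u (a, j, k') + u (a, j', k) + u (a, j', k') ≤ 4 * c) :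
    minmaxVal u ≤ c := by
  classical
  refine minmaxVal_le hu (isMixedStrategy_halfMix j j') (isMixedStrategy_halfMix k k') fun a => ?_
  rw [expectedPayoff_halfMix]
  linarith [h a]

theorem minmaxVal_eq_zero_of_common_zero [Nonempty S₁] (hu : ∀ x, 0 ≤ u x) (j : S₂) (k : S₃)
    (h : ∀ a, u (a, j, k) = 0) : minmaxVal u = 0 :=
  le_antisymm (minmaxVal_le_of_four_cells hu j j k k fun a => by simp [h a])
    (minmaxVal_nonneg hu)

theorem minmaxVal_eq_of_const_action [Nonempty S₁] [Nonempty S₂] [Nonempty S₃] {c : ℝ}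
    (hu : ∀ x, 0 ≤ u x) (huc : ∀ x, u x ≤ c) (a : S₁) (ha : ∀ j k, u (a, j, k) = c) :
    minmaxVal u = c := by
  obtain ⟨j⟩ := ‹Nonempty S₂›
  obtain ⟨k⟩ := ‹Nonempty S₃›
  refine le_antisymm (minmaxVal_le_of_four_cells hu j j k k fun b => ?_) ?_
  · linarith [huc (b, j, k)]
  · exact le_minmaxVal fun σ₂ σ₃ hσ₂ hσ₃ => ⟨a, le_expectedPayoff hσ₂ hσ₃ fun j k => (ha j k).ge⟩

end Minmax

section TwoActions

variable {u : Fin 2 × S₂ × S₃ → ℝ}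

theorem half_le_minmaxVal [Nonempty S₂] [Nonempty S₃]
    (hcover : ∀ j k, 1 ≤ u (0, j, k) + u (1, j, k)) : 1 / 2 ≤ minmaxVal u := by
  refine le_minmaxVal fun σ₂ σ₃ hσ₂ hσ₃ => ?_
  have hsum : 1 ≤ expectedPayoff u σ₂ σ₃ 0 + expectedPayoff u σ₂ σ₃ 1 := by
    simpa only [expectedPayoff, ← sum_add_distrib, mul_add] using le_sum_sum_mul hσ₂ hσ₃ hcover
  by_cases h : 1 / 2 ≤ expectedPayoff u σ₂ σ₃ 0
  · exact ⟨0, h⟩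
  · exact ⟨1, by linarith⟩

theorem three_quarters_le_minmaxVal [Nonempty S₂] [Nonempty S₃] (hu : ∀ x, 0 ≤ u x)
    (hsep : ∀ j k j' k', u (0, j, k) < 1 → u (1, j', k') < 1 → j ≠ j' ∧ k ≠ k') :
    3 / 4 ≤ minmaxVal u := by
  classical
  let R : Fin 2 → Finset S₂ := fun a => univ.filter fun j => ∃ k, u (a, j, k) < 1
  let C : Fin 2 → Finset S₃ := fun a => univ.filter fun k => ∃ j, u (a, j, k) < 1
  have hRC : ∀ a j k, u (a, j, k) < 1 → j ∈ R a ∧ k ∈ C a := fun a j k h =>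
    ⟨mem_filter.2 ⟨mem_univ _, k, h⟩, mem_filter.2 ⟨mem_univ _, j, h⟩⟩
  have hR : Disjoint (R 0) (R 1) :=
    disjoint_filter.2 fun j _ ⟨k, h₀⟩ ⟨k', h₁⟩ => (hsep j k j k' h₀ h₁).1 rfl
  have hC : Disjoint (C 0) (C 1) :=
    disjoint_filter.2 fun k _ ⟨j, h₀⟩ ⟨j', h₁⟩ => (hsep j k j' k h₀ h₁).2 rfl
  refine le_minmaxVal fun σ₂ σ₃ hσ₂ hσ₃ => ?_
  have h₀ := one_sub_expectedPayoff_le hσ₂ hσ₃ (fun j k => hu _) (hRC 0)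
  have h₁ := one_sub_expectedPayoff_le hσ₂ hσ₃ (fun j k => hu _) (hRC 1)
  rcases min_le_iff.1 (min_mul_le_quarter (hσ₂.sum_nonneg _) (hσ₂.sum_nonneg _)
    (hσ₃.sum_nonneg _) (hσ₃.sum_nonneg _)
    (hσ₂.sum_add_sum_le_one hR) (hσ₃.sum_add_sum_le_one hC)) with h | h
  · exact ⟨0, by linarith⟩
  · exact ⟨1, by linarith⟩

theorem minmaxVal_le_half (hu : ∀ x, 0 ≤ u x) (hu₁ : ∀ x, u x ≤ 1) {j j' : S₂} {k k' : S₃}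
    (h₀ : u (0, j, k) = 0) (h₁ : u (1, j', k') = 0) (hline : j = j' ∨ k = k') :
    minmaxVal u ≤ 1 / 2 := by
  have := hu₁ (0, j, k'); have := hu₁ (0, j', k); have := hu₁ (1, j, k); have := hu₁ (1, j', k)
  refine minmaxVal_le_of_four_cells hu j j' k k' (Fin.forall_fin_two.2 ⟨?_, ?_⟩) <;>
    rcases hline with rfl | rfl <;> linarith

theorem minmaxVal_le_three_quarters (hu : ∀ x, 0 ≤ u x) (hu₁ : ∀ x, u x ≤ 1) {j j' : S₂}
    {k k' : S₃} (h₀ : u (0, j, k) = 0) (h₁ : u (1, j', k') = 0) : minmaxVal u ≤ 3 / 4 := by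
  refine minmaxVal_le_of_four_cells hu j j' k k' (Fin.forall_fin_two.2 ⟨?_, ?_⟩) <;>
    linarith [hu₁ (0, j, k'), hu₁ (0, j', k), hu₁ (0, j', k'), hu₁ (1, j, k), hu₁ (1, j, k'),
      hu₁ (1, j', k)]

theorem minmaxVal_mem_of_zero_one [Nonempty S₂] [Nonempty S₃] (h01 : ∀ x, u x = 0 ∨ u x = 1) :
    minmaxVal u ∈ ({0, 1 / 2, 3 / 4, 1} : Set ℝ) := by
  have hu : ∀ x, 0 ≤ u x := fun x => by rcases h01 x with h | h <;> simp [h]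
  have hu₁ : ∀ x, u x ≤ 1 := fun x => by rcases h01 x with h | h <;> simp [h]
  have hzero : ∀ x, u x < 1 → u x = 0 := fun x h => (h01 x).resolve_right h.ne
  by_cases hcommon : ∃ j k, u (0, j, k) = 0 ∧ u (1, j, k) = 0
  · obtain ⟨j, k, h₀, h₁⟩ := hcommon
    exact .inl (minmaxVal_eq_zero_of_common_zero hu j k (Fin.forall_fin_two.2 ⟨h₀, h₁⟩))
  have hcover : ∀ j k, 1 ≤ u (0, j, k) + u (1, j, k) := fun j k => by
    rcases h01 (0, j, k) with h₀ | h₀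
    · linarith [(h01 (1, j, k)).resolve_left fun h₁ => hcommon ⟨j, k, h₀, h₁⟩, hu (0, j, k)]
    · linarith [hu (1, j, k)]
  by_cases hline : ∃ j k j' k', u (0, j, k) = 0 ∧ u (1, j', k') = 0 ∧ (j = j' ∨ k = k')
  · obtain ⟨j, k, j', k', h₀, h₁, hjk⟩ := hline
    exact .inr (.inl (le_antisymm (minmaxVal_le_half hu hu₁ h₀ h₁ hjk) (half_le_minmaxVal hcover)))
  by_cases hboth : (∃ j k, u (0, j, k) = 0) ∧ ∃ j k, u (1, j, k) = 0
  · obtain ⟨⟨j, k, h₀⟩, j', k', h₁⟩ := hboth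
    refine .inr (.inr (.inl (le_antisymm (minmaxVal_le_three_quarters hu hu₁ h₀ h₁) ?_)))
    exact three_quarters_le_minmaxVal hu fun j k j' k' h₀ h₁ =>
      ⟨fun hj => hline ⟨j, k, j', k', hzero _ h₀, hzero _ h₁, .inl hj⟩,
        fun hk => hline ⟨j, k, j', k', hzero _ h₀, hzero _ h₁, .inr hk⟩⟩
  obtain ⟨a, ha⟩ : ∃ a, ∀ j k, u (a, j, k) = 1 := by
    rcases not_and_or.1 hboth with h | h
    exacts [⟨0, fun j k => (h01 _).resolve_left fun h₀ => h ⟨j, k, h₀⟩⟩,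
      ⟨1, fun j k => (h01 _).resolve_left fun h₁ => h ⟨j, k, h₁⟩⟩]
  exact .inr (.inr (.inr (minmaxVal_eq_of_const_action hu hu₁ a ha)))

end TwoActions

/-- For a three-player `2 × n × n` game with 0-1 payoffs, the minmax value for
Player 1 lies in `{0, 1/2, 3/4, 1}`; in particular it is rational. -/
theorem minmax_two_by_n_by_n_zero_one_rational (n : ℕ) (hn : 1 ≤ n)
    (u₁ : Fin 2 × Fin n × Fin n → ℝ) (h01 : ∀ x, u₁ x = 0 ∨ u₁ x = 1) :
    minmaxVal u₁ ∈ ({0, 1 / 2, 3 / 4, 1} : Set ℝ) ∧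
    ∃ q : ℚ, minmaxVal u₁ = (q : ℝ) := by
  have : Nonempty (Fin n) := ⟨⟨0, hn⟩⟩
  have hmem := minmaxVal_mem_of_zero_one h01
  refine ⟨hmem, ?_⟩
  rcases hmem with h | h | h | h <;> rw [h]
  exacts [⟨0, by norm_num⟩, ⟨1 / 2, by norm_num⟩, ⟨3 / 4, by norm_num⟩, ⟨1, by norm_num⟩]
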